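/- Let P be a π-stationary stochastic matrix. Then D^π(GPG‖Π) = D^{π̄}(P̄‖Π̄), where P̄ is the projection chain of P induced by the orbits, π̄(i) := π(O_i), Π is the n×n matrix with Π(x,y) := π(y), and Π̄ is the k×k matrix with Π̄(i,j) := π̄(j). -/
import Mathlib


open Matrix Finset

/-- Total mass of the orbit (block) `i` under `π`. -/
noncomputable def orbMass {n k : ℕ} (π : Fin n → ℝ) (part : Fin n → Fin k) (i : Fin k) : ℝ :=
  ∑ z ∈ Finset.univ.filter (fun z => part z = i), π z

/-- The Gibbs orbit kernel. -/
noncomputable def gibbsKer {n k : ℕ} (π : Fin n → ℝ) (part : Fin n → Fin k) :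
    Matrix (Fin n) (Fin n) ℝ :=
  Matrix.of fun x y => if part y = part x then π y / orbMass π part (part x) else 0

/-- The projection chain of `P` induced by the orbits. -/
noncomputable def projChain {n k : ℕ} (π : Fin n → ℝ) (part : Fin n → Fin k)
    (P : Matrix (Fin n) (Fin n) ℝ) : Matrix (Fin k) (Fin k) ℝ :=
  Matrix.of fun i j =>
    (1 / orbMass π part i) *
      ∑ x ∈ Finset.univ.filter (fun x => part x = i),
        ∑ y ∈ Finset.univ.filter (fun y => part y = j), π x * P x y

/-- The `μ`-weighted KL divergence between two kernels. -/
noncomputable def klDiv {m : ℕ} (μ : Fin m → ℝ) (P Q : Matrix (Fin m) (Fin m) ℝ) : ℝ :=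
  ∑ x, ∑ y, μ x * P x y * Real.log (P x y / Q x y)

lemma orbMass_pos {n k : ℕ} (π : Fin n → ℝ) (hπ : ∀ x, 0 < π x)
    (part : Fin n → Fin k) (hs : Function.Surjective part) (i : Fin k) :
    0 < orbMass π part i := by
  obtain ⟨x, hx⟩ := hs i
  exact Finset.sum_pos' (fun z _ => (hπ z).le) ⟨x, by simp [hx], hπ x⟩

lemma GPG_apply {n k : ℕ} (π : Fin n → ℝ) (part : Fin n → Fin k)
    (P : Matrix (Fin n) (Fin n) ℝ) (x y : Fin n) :
    (gibbsKer π part * P * gibbsKer π part) x y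
      = π y / orbMass π part (part y) * projChain π part P (part x) (part y) := by
  simp only [Matrix.mul_apply, gibbsKer, projChain, Matrix.of_apply]
  have hmid : ∀ v : Fin n,
      (∑ u, (if part u = part x then π u / orbMass π part (part x) else 0) * P u v)
        = ∑ u ∈ Finset.univ.filter (fun u => part u = part x),
            π u / orbMass π part (part x) * P u v := by
    intro v
    rw [Finset.sum_filter]
    exact Finset.sum_congr rfl fun u _ => by split <;> simp
  simp only [hmid]
  have houter :
      (∑ v, (∑ u ∈ Finset.univ.filter (fun u => part u = part x),
            π u / orbMass π part (part x) * P u v) *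
          (if part y = part v then π y / orbMass π part (part v) else 0))
        = ∑ v ∈ Finset.univ.filter (fun v => part v = part y),
            (∑ u ∈ Finset.univ.filter (fun u => part u = part x),
              π u / orbMass π part (part x) * P u v) * (π y / orbMass π part (part y)) := by
    rw [Finset.sum_filter]
    refine Finset.sum_congr rfl fun v _ => ?_
    by_cases h : part v = part y
    · simp [h, eq_comm]
    · rw [if_neg (fun hh : part y = part v => h hh.symm), if_neg h, mul_zero]
  rw [houter]
  simp only [Finset.sum_mul, Finset.mul_sum]
  rw [Finset.sum_comm]
  refine Finset.sum_congr rfl fun u hu => Finset.sum_congr rfl fun v hv => ?_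
  ring

/-- `D^π(GPG‖Π) = D^{π̄}(P̄‖Π̄)`. -/
theorem stmt15 {n k : ℕ} (hn : 0 < n)
    (π : Fin n → ℝ) (hπpos : ∀ x, 0 < π x) (hπsum : ∑ x, π x = 1)
    (part : Fin n → Fin k) (hpart : Function.Surjective part)
    (P : Matrix (Fin n) (Fin n) ℝ)
    (hPnonneg : ∀ x y, 0 ≤ P x y) (hProw : ∀ x, ∑ y, P x y = 1)
    (hPstat : ∀ y, ∑ x, π x * P x y = π y) :
    klDiv π (gibbsKer π part * P * gibbsKer π part) (Matrix.of fun _ y => π y)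
      = klDiv (fun i => orbMass π part i) (projChain π part P)
          (Matrix.of fun _ j => orbMass π part j) := by
  have mpos : ∀ i, 0 < orbMass π part i := orbMass_pos π hπpos part hpart
  have mne : ∀ i, orbMass π part i ≠ 0 := fun i => (mpos i).ne'
  unfold klDiv
  have key : ∀ x y : Fin n,
      π x * (gibbsKer π part * P * gibbsKer π part) x y *
        Real.log ((gibbsKer π part * P * gibbsKer π part) x y /
          (Matrix.of fun _ y => π y) x y)
      = π x * (π y / orbMass π part (part y) * projChain π part P (part x) (part y)) *
          Real.log (projChain π part P (part x) (part y) / orbMass π part (part y)) := by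
    intro x y
    rw [GPG_apply]
    have hπy : π y ≠ 0 := (hπpos y).ne'
    congr 2
    simp only [Matrix.of_apply]
    rw [div_mul_eq_mul_div, div_div, mul_comm (orbMass π part (part y)) (π y),
      mul_div_mul_left _ _ hπy]
  simp only [key]
  rw [← Finset.sum_fiberwise Finset.univ part
      (fun x => ∑ y, π x * (π y / orbMass π part (part y) *
          projChain π part P (part x) (part y)) *
        Real.log (projChain π part P (part x) (part y) / orbMass π part (part y)))]
  refine Finset.sum_congr rfl fun i _ => ?_
  have hx' : ∀ x ∈ Finset.univ.filter (fun x => part x = i),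
      (∑ y, π x * (π y / orbMass π part (part y) * projChain π part P (part x) (part y)) *
        Real.log (projChain π part P (part x) (part y) / orbMass π part (part y)))
      = ∑ j, π x * projChain π part P i j *
          Real.log (projChain π part P i j / orbMass π part j) := by
    intro x hx
    have hxi : part x = i := by simpa using hx
    rw [← Finset.sum_fiberwise Finset.univ part
        (fun y => π x * (π y / orbMass π part (part y) * projChain π part P (part x) (part y)) *
          Real.log (projChain π part P (part x) (part y) / orbMass π part (part y)))]
    refine Finset.sum_congr rfl fun j _ => ?_
    have step : ∀ y ∈ Finset.univ.filter (fun y => part y = j),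
        π x * (π y / orbMass π part (part y) * projChain π part P (part x) (part y)) *
          Real.log (projChain π part P (part x) (part y) / orbMass π part (part y))
        = π y * (π x * projChain π part P i j *
            Real.log (projChain π part P i j / orbMass π part j) / orbMass π part j) := by
      intro y hy
      have hyj : part y = j := by simpa using hy
      rw [hxi, hyj]; ring
    rw [Finset.sum_congr rfl step, ← Finset.sum_mul]
    rw [show (∑ y ∈ Finset.univ.filter (fun y => part y = j), π y) = orbMass π part j from rfl]
    rw [mul_comm, div_mul_cancel₀ _ (mne j)]
  rw [Finset.sum_congr rfl hx', Finset.sum_comm]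
  refine Finset.sum_congr rfl fun j _ => ?_
  rw [← Finset.sum_mul, ← Finset.sum_mul]
  rw [show (∑ x ∈ Finset.univ.filter (fun x => part x = i), π x) = orbMass π part i from rfl]
  simp only [Matrix.of_apply]
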